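/- arXiv:2602.06978 — 4 statements merged into one kernel-verified Lean document; each statement's English description precedes it below -/
import Mathlib

section
/- Let T > 0, τ > 0, α, β ∈ (0,1] and a, b ≥ 0. Let u : [-τ, T] → ℝ be continuous and nonnegative and f : [0, T] → ℝ continuous and nonnegative, and suppose that for all t ∈ [0, T], u(t) ≤ f(t) + a ∫₀ᵗ (t-s)^{α-1} u(s) ds + b ∫₀ᵗ (t-s)^{β-1} u(s-τ) ds. Set θ = a T^α/α + b T^β/β and H = sup_{s ∈ [-τ,0]} u(s). If θ < 1, then sup_{t ∈ [0,T]} u(t) ≤ ( sup_{t ∈ [0,T]} f(t) + b (T^β/β) H ) / (1 - θ). -/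
/-!
Bound each weakly singular integral by the supremum of its integrand times
`∫₀ᵗ (t-s)^(γ-1) ds = t^γ/γ ≤ T^γ/γ`. The delayed argument `s - τ` lies either in the history
interval or in `[0,T]`, so `u(s-τ) ≤ H + M` with `M = sup_{[0,T]} u`. Taking the supremum over `t`
gives `M ≤ sup f + b (T^β/β) H + θ M`, and `θ < 1` lets the last term be absorbed.
-/

open MeasureTheory Set Real

theorem ContinuousOn.le_ciSup_Icc {u : ℝ → ℝ} {a b t : ℝ} (hu : ContinuousOn u (Icc a b))
    (ht : t ∈ Icc a b) : u t ≤ ⨆ s : Icc a b, u s := by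
  refine le_ciSup (f := fun s : Icc a b => u s) ?_ ⟨t, ht⟩
  rw [← image_eq_range]
  exact (isCompact_Icc.image_of_continuousOn hu).bddAbove

section SingularKernel

variable {t γ : ℝ}

theorem integrableOn_Ioc_sub_rpow (ht : 0 ≤ t) (hγ : 0 < γ) :
    IntegrableOn (fun s => (t - s) ^ (γ - 1)) (Ioc 0 t) := by
  rw [← intervalIntegrable_iff_integrableOn_Ioc_of_le ht]
  simpa using ((intervalIntegral.intervalIntegrable_rpow' (a := 0) (b := t)
    (r := γ - 1) (by linarith)).comp_sub_left t).symm

theorem integral_Ioc_sub_rpow (ht : 0 ≤ t) (hγ : 0 < γ) :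
    ∫ s in Ioc 0 t, (t - s) ^ (γ - 1) = t ^ γ / γ := by
  rw [← intervalIntegral.integral_of_le ht,
    intervalIntegral.integral_comp_sub_left (fun x => x ^ (γ - 1)) t, sub_self, sub_zero,
    integral_rpow (Or.inl (by linarith)), sub_add_cancel, zero_rpow hγ.ne', sub_zero]

theorem integral_Ioc_sub_rpow_mul_le {T C : ℝ} {v : ℝ → ℝ} (ht : t ∈ Icc 0 T) (hγ : 0 < γ)
    (hC : 0 ≤ C) (hv : ∀ s ∈ Ioc 0 t, v s ∈ Icc 0 C) :
    ∫ s in Ioc 0 t, (t - s) ^ (γ - 1) * v s ≤ C * (T ^ γ / γ) := by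
  have hkernel : ∀ s ∈ Ioc 0 t, 0 ≤ (t - s) ^ (γ - 1) := fun s hs =>
    rpow_nonneg (sub_nonneg.2 hs.2) _
  calc ∫ s in Ioc 0 t, (t - s) ^ (γ - 1) * v s
      ≤ ∫ s in Ioc 0 t, C * (t - s) ^ (γ - 1) := by
        refine integral_mono_of_nonneg ?_ ((integrableOn_Ioc_sub_rpow ht.1 hγ).const_mul C) ?_
        · filter_upwards [ae_restrict_mem measurableSet_Ioc] with s hs
          exact mul_nonneg (hkernel s hs) (hv s hs).1
        · filter_upwards [ae_restrict_mem measurableSet_Ioc] with s hs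
          rw [mul_comm C]
          exact mul_le_mul_of_nonneg_left (hv s hs).2 (hkernel s hs)
    _ = C * (t ^ γ / γ) := by rw [integral_const_mul, integral_Ioc_sub_rpow ht.1 hγ]
    _ ≤ C * (T ^ γ / γ) := by have := rpow_le_rpow ht.1 ht.2 hγ.le; gcongr

end SingularKernel

theorem delay_le_add {u : ℝ → ℝ} {τ T H M s : ℝ} (hH : ∀ r ∈ Icc (-τ) 0, u r ≤ H)
    (hM : ∀ r ∈ Icc 0 T, u r ≤ M) (hH0 : 0 ≤ H) (hM0 : 0 ≤ M) (hτ : 0 < τ) (hs : s ∈ Icc 0 T) :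
    u (s - τ) ≤ H + M := by
  rcases le_or_gt (s - τ) 0 with h | h
  · linarith [hH (s - τ) ⟨by linarith [hs.1], h⟩]
  · linarith [hM (s - τ) ⟨h.le, by linarith [hs.2]⟩]

theorem scalar_fractional_gronwall_wendroff_small_horizon_general
    (T τ α β a b : ℝ) (hT : 0 < T) (hτ : 0 < τ)
    (hα : α ∈ Set.Ioc (0:ℝ) 1) (hβ : β ∈ Set.Ioc (0:ℝ) 1)
    (ha : 0 ≤ a) (hb : 0 ≤ b)
    (u f : ℝ → ℝ)
    (hu : ContinuousOn u (Set.Icc (-τ) T))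
    (hu0 : ∀ t ∈ Set.Icc (-τ) T, 0 ≤ u t)
    (hf : ContinuousOn f (Set.Icc (0:ℝ) T))
    (hineq : ∀ t ∈ Set.Icc (0:ℝ) T,
      u t ≤ f t + a * (∫ s in Set.Ioc (0:ℝ) t, (t - s) ^ (α - 1) * u s)
        + b * (∫ s in Set.Ioc (0:ℝ) t, (t - s) ^ (β - 1) * u (s - τ)))
    (θ H : ℝ)
    (hθ : θ = a * T ^ α / α + b * T ^ β / β)
    (hH : H = ⨆ s : Set.Icc (-τ) (0:ℝ), u s)
    (hθ1 : θ < 1) :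
    (⨆ t : Set.Icc (0:ℝ) T, u t) ≤
      ((⨆ t : Set.Icc (0:ℝ) T, f t) + b * (T ^ β / β) * H) / (1 - θ) := by
  set M := ⨆ t : Icc (0:ℝ) T, u t
  set F := ⨆ t : Icc (0:ℝ) T, f t
  have hpresent : Icc 0 T ⊆ Icc (-τ) T := Icc_subset_Icc (by linarith) le_rfl
  have hpast : Icc (-τ) 0 ⊆ Icc (-τ) T := Icc_subset_Icc le_rfl hT.le
  have h0T : (0:ℝ) ∈ Icc 0 T := ⟨le_rfl, hT.le⟩
  have huM : ∀ t ∈ Icc 0 T, u t ≤ M := fun t => (hu.mono hpresent).le_ciSup_Icc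
  have huH : ∀ s ∈ Icc (-τ) 0, u s ≤ H := fun s => hH ▸ (hu.mono hpast).le_ciSup_Icc
  have hM0 : 0 ≤ M := (hu0 0 (hpresent h0T)).trans (huM 0 h0T)
  have hH0 : 0 ≤ H := (hu0 0 (hpresent h0T)).trans (huH 0 ⟨by linarith, le_rfl⟩)
  have hbound : ∀ t ∈ Icc 0 T, u t ≤ F + b * (T ^ β / β) * H + θ * M := fun t ht => by
    have hIu := integral_Ioc_sub_rpow_mul_le ht hα.1 hM0 fun s hs =>
      have hs' : s ∈ Icc 0 T := ⟨hs.1.le, hs.2.trans ht.2⟩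
      ⟨hu0 s (hpresent hs'), huM s hs'⟩
    have hIdelay := integral_Ioc_sub_rpow_mul_le ht hβ.1 (add_nonneg hH0 hM0) fun s hs =>
      have hs' : s ∈ Icc 0 T := ⟨hs.1.le, hs.2.trans ht.2⟩
      ⟨hu0 _ ⟨by linarith [hs'.1], by linarith [hs'.2]⟩, delay_le_add huH huM hH0 hM0 hτ hs'⟩
    calc u t ≤ F + a * (M * (T ^ α / α)) + b * ((H + M) * (T ^ β / β)) := by
          refine (hineq t ht).trans ?_
          gcongr
          exact hf.le_ciSup_Icc ht
      _ = F + b * (T ^ β / β) * H + θ * M := by rw [hθ]; ring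
  have hM : M ≤ F + b * (T ^ β / β) * H + θ * M :=
    have : Nonempty (Icc (0:ℝ) T) := ⟨⟨0, h0T⟩⟩
    ciSup_le fun t => hbound t t.2
  rw [le_div_iff₀ (by linarith)]
  linarith

/-- **Quantitative small-horizon fractional Grönwall–Wendroff inequality.**
If a nonnegative continuous `u` satisfies
`u(t) ≤ f(t) + a ∫₀ᵗ (t-s)^(α-1) u(s) ds + b ∫₀ᵗ (t-s)^(β-1) u(s-τ) ds` on `[0,T]`,
and `θ = a T^α/α + b T^β/β < 1`, then
`sup_{[0,T]} u ≤ (sup_{[0,T]} f + b (T^β/β) H) / (1-θ)`,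
where `H = sup_{[-τ,0]} u`. -/
theorem scalar_fractional_gronwall_wendroff_small_horizon
    (T τ α β a b : ℝ) (hT : 0 < T) (hτ : 0 < τ)
    (hα : α ∈ Set.Ioc (0:ℝ) 1) (hβ : β ∈ Set.Ioc (0:ℝ) 1)
    (ha : 0 ≤ a) (hb : 0 ≤ b)
    (u f : ℝ → ℝ)
    (hu : ContinuousOn u (Set.Icc (-τ) T))
    (hu0 : ∀ t ∈ Set.Icc (-τ) T, 0 ≤ u t)
    (hf : ContinuousOn f (Set.Icc (0:ℝ) T))
    (hf0 : ∀ t ∈ Set.Icc (0:ℝ) T, 0 ≤ f t)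
    (hineq : ∀ t ∈ Set.Icc (0:ℝ) T,
      u t ≤ f t + a * (∫ s in Set.Ioc (0:ℝ) t, (t - s) ^ (α - 1) * u s)
        + b * (∫ s in Set.Ioc (0:ℝ) t, (t - s) ^ (β - 1) * u (s - τ)))
    (θ H : ℝ)
    (hθ : θ = a * T ^ α / α + b * T ^ β / β)
    (hH : H = ⨆ s : Set.Icc (-τ) (0:ℝ), u s)
    (hθ1 : θ < 1) :
    (⨆ t : Set.Icc (0:ℝ) T, u t) ≤
      ((⨆ t : Set.Icc (0:ℝ) T, f t) + b * (T ^ β / β) * H) / (1 - θ) :=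
  scalar_fractional_gronwall_wendroff_small_horizon_general T τ α β a b hT hτ hα hβ ha hb u f hu hu0
    hf hineq θ H hθ hH hθ1
end

section
/- Let n ≥ 1, T > 0, τ > 0, α ∈ (0,1], x₀ ∈ ℝⁿ, and let φ : [-τ, 0] → ℝⁿ be continuous with φ(0) = x₀. Let G : [0,T] × ℝⁿ × ℝⁿ → ℝⁿ be continuous and satisfy ‖G(t, u₁, v₁) - G(t, u₂, v₂)‖ ≤ L (‖u₁ - u₂‖ + ‖v₁ - v₂‖) for all t and all arguments. For continuous x : [-τ, T] → ℝⁿ with x = φ on [-τ, 0], define (𝒯x)(t) = x₀ + (1/Γ(α)) ∫₀ᵗ (t-s)^{α-1} G(s, x(s), x(s-τ)) ds for t ∈ [0,T] and (𝒯x)(t) = φ(t) for t ∈ [-τ, 0]. Then for every κ ∈ (0,1) there exists ρ > 0 such that for all such x₁, x₂, sup_{t ∈ [0,T]} e^{-ρ t} ‖(𝒯x₁)(t) - (𝒯x₂)(t)‖ ≤ κ · sup_{t ∈ [0,T]} e^{-ρ t} ‖x₁(t) - x₂(t)‖; in particular 𝒯 is a strict contraction in the exponentially weighted norm ‖x‖_ρ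 = sup_{t ∈ [0,T]} e^{-ρ t} ‖x(t)‖. -/
/-!
With `d = x₁ - x₂`, which vanishes on the history interval, the Lipschitz bound gives
`‖G(s, x₁(s), x₁(s-τ)) - G(s, x₂(s), x₂(s-τ))‖ ≤ 2L ‖d‖_ρ e^{ρs}`, since the delay only lowers the
weight `e^{ρ(s-τ)}`. Substituting `u = t - s` in the fractional integral then bounds
`e^{-ρt} ‖(𝒯x₁)(t) - (𝒯x₂)(t)‖` by `2L ‖d‖_ρ Γ(α)⁻¹ ∫₀^∞ u^{α-1} e^{-ρu} du = 2L ρ^{-α} ‖d‖_ρ`,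
which is at most `κ ‖d‖_ρ` once `ρ` is large.
-/

open MeasureTheory Set Real Filter Topology

section FractionalKernel

variable {E : Type*} [NormedAddCommGroup E] [NormedSpace ℝ E] {α t : ℝ}

noncomputable def riemannLiouvilleIntegral (α : ℝ) (g : ℝ → E) (t : ℝ) : E :=
  (Gamma α)⁻¹ • ∫ s in Ioc 0 t, (t - s) ^ (α - 1) • g s

lemma integrableOn_rpow_sub_smul (hα : 0 < α) {g : ℝ → E} (hg : ContinuousOn g (Icc 0 t)) :
    IntegrableOn (fun s => (t - s) ^ (α - 1) • g s) (Ioc 0 t) := by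
  rcases le_total 0 t with ht | ht
  · have hker : IntervalIntegrable (fun s : ℝ => (t - s) ^ (α - 1)) volume 0 t := by
      simpa using ((intervalIntegral.intervalIntegrable_rpow' (a := t) (b := 0)
        (r := α - 1) (by linarith)).comp_sub_left t)
    exact ((intervalIntegrable_iff_integrableOn_Ioc_of_le ht).1 hker).smul_continuousOn_of_subset
      hg measurableSet_Ioc isCompact_Icc Ioc_subset_Icc_self
  · simp [Ioc_eq_empty_of_le ht]

lemma integral_rpow_sub_mul_exp_le (hα : 0 < α) {ρ : ℝ} (hρ : 0 < ρ) (ht : 0 ≤ t) :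
    ∫ s in Ioc 0 t, (t - s) ^ (α - 1) * exp (ρ * s) ≤ exp (ρ * t) * ((1 / ρ) ^ α * Gamma α) := by
  set F : ℝ → ℝ := fun u => u ^ (α - 1) * exp (-(ρ * u))
  have hF : IntegrableOn F (Ioi 0) := by
    simpa [F] using integrableOn_rpow_mul_exp_neg_mul_rpow (s := α - 1) (p := 1) (b := ρ)
      (by linarith) zero_lt_one hρ
  have hshift : ∫ s in Ioc 0 t, (t - s) ^ (α - 1) * exp (ρ * s)
      = exp (ρ * t) * ∫ u in Ioc 0 t, F u := by
    have hsub := intervalIntegral.integral_comp_sub_left F t (a := 0) (b := t)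
    rw [sub_self, sub_zero] at hsub
    rw [← intervalIntegral.integral_of_le ht, ← intervalIntegral.integral_of_le ht, ← hsub,
      ← intervalIntegral.integral_const_mul]
    refine intervalIntegral.integral_congr fun s _ => ?_
    simp only [F, mul_left_comm (exp (ρ * t)), ← exp_add]
    ring_nf
  rw [hshift, ← integral_rpow_mul_exp_neg_mul_Ioi hα hρ]
  refine mul_le_mul_of_nonneg_left ?_ (exp_pos _).le
  refine setIntegral_mono_set hF (ae_restrict_of_forall_mem measurableSet_Ioi fun u hu => ?_)
    Ioc_subset_Ioi_self.eventuallyLE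
  have : 0 < u := hu
  positivity

lemma norm_integral_rpow_sub_smul_le (hα : 0 < α) {ρ C : ℝ} (hρ : 0 < ρ) (ht : 0 ≤ t)
    (hC : 0 ≤ C) {h : ℝ → E} (hh : ∀ s ∈ Ioc 0 t, ‖h s‖ ≤ C * exp (ρ * s)) :
    ‖∫ s in Ioc 0 t, (t - s) ^ (α - 1) • h s‖ ≤ C * (exp (ρ * t) * ((1 / ρ) ^ α * Gamma α)) := by
  have hdom : IntegrableOn (fun s => (t - s) ^ (α - 1) • (C * exp (ρ * s))) (Ioc 0 t) :=
    integrableOn_rpow_sub_smul hα (by fun_prop)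
  calc ‖∫ s in Ioc 0 t, (t - s) ^ (α - 1) • h s‖
      ≤ ∫ s in Ioc 0 t, (t - s) ^ (α - 1) • (C * exp (ρ * s)) := by
        refine norm_integral_le_of_norm_le hdom
          (ae_restrict_of_forall_mem measurableSet_Ioc fun s hs => ?_)
        have hts : 0 ≤ t - s := sub_nonneg.2 hs.2
        rw [norm_smul, norm_of_nonneg (rpow_nonneg hts _)]
        exact mul_le_mul_of_nonneg_left (hh s hs) (rpow_nonneg hts _)
    _ = C * ∫ s in Ioc 0 t, (t - s) ^ (α - 1) * exp (ρ * s) := by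
        rw [← integral_const_mul]
        simp only [smul_eq_mul, mul_left_comm]
    _ ≤ C * (exp (ρ * t) * ((1 / ρ) ^ α * Gamma α)) :=
        mul_le_mul_of_nonneg_left (integral_rpow_sub_mul_exp_le hα hρ ht) hC

lemma exp_mul_norm_riemannLiouvilleIntegral_sub_le (hα : 0 < α) {ρ C : ℝ} (hρ : 0 < ρ)
    (ht : 0 ≤ t) (hC : 0 ≤ C) {g₁ g₂ : ℝ → E} (hg₁ : ContinuousOn g₁ (Icc 0 t))
    (hg₂ : ContinuousOn g₂ (Icc 0 t)) (hg : ∀ s ∈ Ioc 0 t, ‖g₁ s - g₂ s‖ ≤ C * exp (ρ * s)) :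
    exp (-ρ * t) * ‖riemannLiouvilleIntegral α g₁ t - riemannLiouvilleIntegral α g₂ t‖ ≤
      C * (1 / ρ) ^ α := by
  have hΓ : 0 < Gamma α := Gamma_pos_of_pos hα
  rw [riemannLiouvilleIntegral, riemannLiouvilleIntegral, ← smul_sub,
    ← integral_sub (integrableOn_rpow_sub_smul hα hg₁) (integrableOn_rpow_sub_smul hα hg₂),
    norm_smul, norm_inv, norm_of_nonneg hΓ.le]
  simp_rw [← smul_sub]
  calc exp (-ρ * t) * ((Gamma α)⁻¹ * ‖∫ s in Ioc 0 t, (t - s) ^ (α - 1) • (g₁ s - g₂ s)‖)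
      ≤ exp (-ρ * t) * ((Gamma α)⁻¹ * (C * (exp (ρ * t) * ((1 / ρ) ^ α * Gamma α)))) := by
        gcongr
        exact norm_integral_rpow_sub_smul_le hα hρ ht hC hg
    _ = C * (1 / ρ) ^ α := by
        rw [neg_mul, exp_neg]
        field_simp

end FractionalKernel

lemma exists_pos_mul_one_div_rpow_le (c : ℝ) {α κ : ℝ} (hα : 0 < α) (hκ : 0 < κ) :
    ∃ ρ > 0, c * (1 / ρ) ^ α ≤ κ := by
  have hlim : Tendsto (fun ρ : ℝ => c * (1 / ρ) ^ α) atTop (𝓝 0) := by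
    rw [← mul_zero c]
    refine ((tendsto_rpow_neg_atTop hα).const_mul c).congr' ?_
    filter_upwards [eventually_gt_atTop 0] with ρ hρ
    rw [one_div, inv_rpow hρ.le, rpow_neg hρ.le]
  obtain ⟨ρ, hρκ, hρ⟩ := ((hlim.eventually (gt_mem_nhds hκ)).and (eventually_gt_atTop 0)).exists
  exact ⟨ρ, hρ, hρκ.le⟩

lemma continuousOn_comp_delay {E F : Type*} [TopologicalSpace E] [TopologicalSpace F]
    {G : ℝ → E → E → F} {x : ℝ → E} {T τ : ℝ}
    (hG : ContinuousOn (fun p : ℝ × E × E => G p.1 p.2.1 p.2.2) (Icc 0 T ×ˢ univ ×ˢ univ))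
    (hτ : 0 ≤ τ) (hx : ContinuousOn x (Icc (-τ) T)) :
    ContinuousOn (fun s => G s (x s) (x (s - τ))) (Icc 0 T) := by
  have hdelay : MapsTo (fun s => s - τ) (Icc 0 T) (Icc (-τ) T) :=
    fun s hs => ⟨by linarith [hs.1], by linarith [hs.2]⟩
  refine hG.comp (continuousOn_id.prodMk ((hx.mono ?_).prodMk (hx.comp (by fun_prop) hdelay)))
    fun s hs => ⟨hs, mem_univ _, mem_univ _⟩
  exact Icc_subset_Icc (by linarith) le_rfl

section WeightedSupNorm

variable {E : Type*} [NormedAddCommGroup E] {ρ T : ℝ} {x : ℝ → E}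

noncomputable def expWeightedSupNorm (ρ T : ℝ) (x : ℝ → E) : ℝ :=
  ⨆ t : Icc (0 : ℝ) T, exp (-ρ * t) * ‖x t‖

lemma expWeightedSupNorm_nonneg : 0 ≤ expWeightedSupNorm ρ T x :=
  Real.iSup_nonneg fun _ => by positivity

lemma expWeightedSupNorm_le {C : ℝ} (hC : 0 ≤ C)
    (h : ∀ t ∈ Icc 0 T, exp (-ρ * t) * ‖x t‖ ≤ C) : expWeightedSupNorm ρ T x ≤ C :=
  Real.iSup_le (fun t => h t t.2) hC

lemma norm_le_expWeightedSupNorm_mul_exp (hx : ContinuousOn x (Icc 0 T)) {s : ℝ}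
    (hs : s ∈ Icc 0 T) : ‖x s‖ ≤ expWeightedSupNorm ρ T x * exp (ρ * s) := by
  have hbdd : BddAbove (range fun t : Icc (0 : ℝ) T => exp (-ρ * t) * ‖x t‖) :=
    (isCompact_Icc.bddAbove_image (by fun_prop : ContinuousOn (fun t => exp (-ρ * t) * ‖x t‖)
      (Icc 0 T))).mono (by rintro _ ⟨t, rfl⟩; exact ⟨t, t.2, rfl⟩)
  calc ‖x s‖ = exp (-ρ * s) * ‖x s‖ * exp (ρ * s) := by
        rw [mul_right_comm, ← exp_add, neg_mul, neg_add_cancel, exp_zero, one_mul]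
    _ ≤ expWeightedSupNorm ρ T x * exp (ρ * s) :=
        mul_le_mul_of_nonneg_right (le_ciSup hbdd ⟨s, hs⟩) (exp_pos _).le

lemma norm_delay_le_expWeightedSupNorm_mul_exp (hρ : 0 ≤ ρ) {τ : ℝ} (hτ : 0 ≤ τ)
    (hx : ContinuousOn x (Icc 0 T)) (hhist : ∀ r ∈ Icc (-τ) 0, x r = 0) {s : ℝ}
    (hs : s ∈ Icc 0 T) : ‖x (s - τ)‖ ≤ expWeightedSupNorm ρ T x * exp (ρ * s) := by
  rcases le_or_gt (s - τ) 0 with hle | hpos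
  · rw [hhist _ ⟨by linarith [hs.1], hle⟩, norm_zero]
    exact mul_nonneg expWeightedSupNorm_nonneg (exp_pos _).le
  · calc ‖x (s - τ)‖ ≤ expWeightedSupNorm ρ T x * exp (ρ * (s - τ)) :=
          norm_le_expWeightedSupNorm_mul_exp hx ⟨hpos.le, by linarith [hs.2]⟩
      _ ≤ expWeightedSupNorm ρ T x * exp (ρ * s) := by
          gcongr
          · exact expWeightedSupNorm_nonneg
          · nlinarith

end WeightedSupNorm

lemma norm_sub_comp_delay_le {E F : Type*} [NormedAddCommGroup E] [NormedAddCommGroup F]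
    {G : ℝ → E → E → F} {L ρ T τ s : ℝ} {x₁ x₂ : ℝ → E}
    (hGL : ∀ u₁ v₁ u₂ v₂, ‖G s u₁ v₁ - G s u₂ v₂‖ ≤ L * (‖u₁ - u₂‖ + ‖v₁ - v₂‖))
    (hρ : 0 ≤ ρ) (hτ : 0 ≤ τ) (hx : ContinuousOn (x₁ - x₂) (Icc 0 T))
    (hhist : ∀ r ∈ Icc (-τ) 0, x₁ r = x₂ r) (hs : s ∈ Icc 0 T) :
    ‖G s (x₁ s) (x₁ (s - τ)) - G s (x₂ s) (x₂ (s - τ))‖ ≤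
      2 * max L 0 * expWeightedSupNorm ρ T (x₁ - x₂) * exp (ρ * s) := by
  have hnow := norm_le_expWeightedSupNorm_mul_exp (ρ := ρ) hx hs
  have hdelay := norm_delay_le_expWeightedSupNorm_mul_exp hρ hτ hx
    (fun r hr => sub_eq_zero.2 (hhist r hr)) hs
  simp only [Pi.sub_apply] at hnow hdelay
  calc ‖G s (x₁ s) (x₁ (s - τ)) - G s (x₂ s) (x₂ (s - τ))‖
      ≤ max L 0 * (‖x₁ s - x₂ s‖ + ‖x₁ (s - τ) - x₂ (s - τ)‖) :=
        (hGL _ _ _ _).trans (by gcongr; exact le_max_left _ _)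
    _ ≤ 2 * max L 0 * expWeightedSupNorm ρ T (x₁ - x₂) * exp (ρ * s) := by
        nlinarith [le_max_right L 0]

theorem volterra_operator_contraction_weighted_norm_general
    (n : ℕ) (T τ α L : ℝ) (hτ : 0 < τ)
    (hα : α ∈ Set.Ioc (0:ℝ) 1)
    (x₀ : EuclideanSpace ℝ (Fin n)) (φ : ℝ → EuclideanSpace ℝ (Fin n))
    (G : ℝ → EuclideanSpace ℝ (Fin n) → EuclideanSpace ℝ (Fin n) →
      EuclideanSpace ℝ (Fin n))
    (hGc : ContinuousOn
      (fun p : ℝ × EuclideanSpace ℝ (Fin n) × EuclideanSpace ℝ (Fin n) =>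
        G p.1 p.2.1 p.2.2)
      (Set.Icc (0:ℝ) T ×ˢ (Set.univ ×ˢ Set.univ)))
    (hGL : ∀ t ∈ Set.Icc (0:ℝ) T, ∀ u₁ v₁ u₂ v₂,
      ‖G t u₁ v₁ - G t u₂ v₂‖ ≤ L * (‖u₁ - u₂‖ + ‖v₁ - v₂‖))
    (𝒯 : (ℝ → EuclideanSpace ℝ (Fin n)) → ℝ → EuclideanSpace ℝ (Fin n))
    (h𝒯 : ∀ x : ℝ → EuclideanSpace ℝ (Fin n),
      (∀ t ∈ Set.Icc (0:ℝ) T, 𝒯 x t =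
        x₀ + (Real.Gamma α)⁻¹ •
          ∫ s in Set.Ioc (0:ℝ) t, ((t - s) ^ (α - 1)) • G s (x s) (x (s - τ))) ∧
      (∀ t ∈ Set.Icc (-τ) (0:ℝ), 𝒯 x t = φ t))
    (κ : ℝ) (hκ : κ ∈ Set.Ioo (0:ℝ) 1) :
    ∃ ρ > 0, ∀ x₁ x₂ : ℝ → EuclideanSpace ℝ (Fin n),
      ContinuousOn x₁ (Set.Icc (-τ) T) → ContinuousOn x₂ (Set.Icc (-τ) T) →
      (∀ t ∈ Set.Icc (-τ) (0:ℝ), x₁ t = φ t) →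
      (∀ t ∈ Set.Icc (-τ) (0:ℝ), x₂ t = φ t) →
      (⨆ t : Set.Icc (0:ℝ) T, Real.exp (-ρ * t) * ‖𝒯 x₁ t - 𝒯 x₂ t‖) ≤
        κ * ⨆ t : Set.Icc (0:ℝ) T, Real.exp (-ρ * t) * ‖x₁ t - x₂ t‖ := by
  obtain ⟨ρ, hρ, hρκ⟩ := exists_pos_mul_one_div_rpow_le (2 * max L 0) hα.1 hκ.1
  refine ⟨ρ, hρ, fun x₁ x₂ hx₁ hx₂ hφ₁ hφ₂ => ?_⟩
  change expWeightedSupNorm ρ T (𝒯 x₁ - 𝒯 x₂) ≤ κ * expWeightedSupNorm ρ T (x₁ - x₂)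
  have hN : 0 ≤ expWeightedSupNorm ρ T (x₁ - x₂) := expWeightedSupNorm_nonneg
  have hx : ContinuousOn (x₁ - x₂) (Icc 0 T) :=
    (hx₁.sub hx₂).mono (Icc_subset_Icc (by linarith) le_rfl)
  refine expWeightedSupNorm_le (mul_nonneg hκ.1.le hN) fun t ht => ?_
  have hIcc : Icc 0 t ⊆ Icc 0 T := Icc_subset_Icc le_rfl ht.2
  have hsub : Ioc 0 t ⊆ Icc 0 T := Ioc_subset_Icc_self.trans hIcc
  rw [Pi.sub_apply, (h𝒯 x₁).1 t ht, (h𝒯 x₂).1 t ht, add_sub_add_left_eq_sub]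
  calc _ ≤ 2 * max L 0 * expWeightedSupNorm ρ T (x₁ - x₂) * (1 / ρ) ^ α :=
        exp_mul_norm_riemannLiouvilleIntegral_sub_le hα.1 hρ ht.1 (by positivity)
          ((continuousOn_comp_delay hGc hτ.le hx₁).mono hIcc)
          ((continuousOn_comp_delay hGc hτ.le hx₂).mono hIcc)
          fun s hs => norm_sub_comp_delay_le (hGL s (hsub hs)) hρ.le hτ.le hx
            (fun r hr => (hφ₁ r hr).trans (hφ₂ r hr).symm) (hsub hs)
    _ ≤ κ * expWeightedSupNorm ρ T (x₁ - x₂) := by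
        rw [mul_right_comm]
        exact mul_le_mul_of_nonneg_right hρκ hN

/-- **Contraction of the Volterra operator in an exponentially weighted norm.**
Given the delayed fractional Volterra operator
`(𝒯x)(t) = x₀ + (1/Γ(α)) ∫₀ᵗ (t-s)^(α-1) G(s, x(s), x(s-τ)) ds` on `[0,T]`
(extended by the history `φ` on `[-τ,0]`), with `G` continuous and Lipschitz,
for every `κ ∈ (0,1)` there is a weight `ρ > 0` making `𝒯` a `κ`-contraction
in the norm `‖x‖_ρ = sup_{t∈[0,T]} e^(-ρt) ‖x(t)‖` on functions sharing the
history `φ`. -/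
theorem volterra_operator_contraction_weighted_norm
    (n : ℕ) (hn : 1 ≤ n) (T τ α L : ℝ) (hT : 0 < T) (hτ : 0 < τ)
    (hα : α ∈ Set.Ioc (0:ℝ) 1)
    (x₀ : EuclideanSpace ℝ (Fin n)) (φ : ℝ → EuclideanSpace ℝ (Fin n))
    (hφ : ContinuousOn φ (Set.Icc (-τ) (0:ℝ))) (hφ0 : φ 0 = x₀)
    (G : ℝ → EuclideanSpace ℝ (Fin n) → EuclideanSpace ℝ (Fin n) →
      EuclideanSpace ℝ (Fin n))
    (hGc : ContinuousOn
      (fun p : ℝ × EuclideanSpace ℝ (Fin n) × EuclideanSpace ℝ (Fin n) =>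
        G p.1 p.2.1 p.2.2)
      (Set.Icc (0:ℝ) T ×ˢ (Set.univ ×ˢ Set.univ)))
    (hGL : ∀ t ∈ Set.Icc (0:ℝ) T, ∀ u₁ v₁ u₂ v₂,
      ‖G t u₁ v₁ - G t u₂ v₂‖ ≤ L * (‖u₁ - u₂‖ + ‖v₁ - v₂‖))
    (𝒯 : (ℝ → EuclideanSpace ℝ (Fin n)) → ℝ → EuclideanSpace ℝ (Fin n))
    (h𝒯 : ∀ x : ℝ → EuclideanSpace ℝ (Fin n),
      (∀ t ∈ Set.Icc (0:ℝ) T, 𝒯 x t =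
        x₀ + (Real.Gamma α)⁻¹ •
          ∫ s in Set.Ioc (0:ℝ) t, ((t - s) ^ (α - 1)) • G s (x s) (x (s - τ))) ∧
      (∀ t ∈ Set.Icc (-τ) (0:ℝ), 𝒯 x t = φ t))
    (κ : ℝ) (hκ : κ ∈ Set.Ioo (0:ℝ) 1) :
    ∃ ρ > 0, ∀ x₁ x₂ : ℝ → EuclideanSpace ℝ (Fin n),
      ContinuousOn x₁ (Set.Icc (-τ) T) → ContinuousOn x₂ (Set.Icc (-τ) T) →
      (∀ t ∈ Set.Icc (-τ) (0:ℝ), x₁ t = φ t) →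
      (∀ t ∈ Set.Icc (-τ) (0:ℝ), x₂ t = φ t) →
      (⨆ t : Set.Icc (0:ℝ) T, Real.exp (-ρ * t) * ‖𝒯 x₁ t - 𝒯 x₂ t‖) ≤
        κ * ⨆ t : Set.Icc (0:ℝ) T, Real.exp (-ρ * t) * ‖x₁ t - x₂ t‖ :=
  volterra_operator_contraction_weighted_norm_general n T τ α L hτ hα x₀ φ G hGc hGL 𝒯 h𝒯 κ hκ
end

section
/- Let n ≥ 1, T > 0, τ > 0, α ∈ (0,1], and let φ : [-τ, 0] → ℝⁿ be continuous. Let G : [0,T] × ℝⁿ × ℝⁿ → ℝⁿ be continuous and satisfy ‖G(t, u₁, v₁) - G(t, u₂, v₂)‖ ≤ L (‖u₁ - u₂‖ + ‖v₁ - v₂‖) for all arguments. Then there exists a unique continuous function x : [-τ, T] → ℝⁿ such that x(t) = φ(t) for t ∈ [-τ, 0] and x(t) = φ(0) + (1/Γ(α)) ∫₀ᵗ (t-s)^{α-1} G(s, x(s), x(s-τ)) ds for all t ∈ [0, T]. -/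
/-!
The equation is the fixed-point problem `x = V x` on `C([-τ, T])` for
`V x t = φ (min t 0) + I^α [s ↦ G s (x s) (x (s - τ))] t`, with `I^α` the Riemann–Liouville
integral. `V` preserves continuity because `I^α` of a bounded function is `α`-Hölder. In the
Bielecki distance `sup_t exp (-l t) ‖x t - y t‖`, the Gamma-integral bound
`I^α [exp (l ·)] t ≤ exp (l t) / l ^ α` and `exp (l (s - τ)) ≤ exp (l s)` make `V` Lipschitz with
constant `2 L / l ^ α`, a contraction once `l` is large; Banach's fixed-point theorem, applied
after conjugating by the weight `exp (-l t)`, gives existence and uniqueness.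
-/

open MeasureTheory Set Real

/-- `x` solves the Volterra integral-equation formulation of the Caputo
initial value problem `ᶜD^α x(t) = G(t, x(t), x(t-τ))` on `[0,T]` with initial
history `φ` on `[-τ,0]`. -/
def IsVolterraSolution {n : ℕ} (T τ α : ℝ)
    (φ : ℝ → EuclideanSpace ℝ (Fin n))
    (G : ℝ → EuclideanSpace ℝ (Fin n) → EuclideanSpace ℝ (Fin n) →
      EuclideanSpace ℝ (Fin n))
    (x : ℝ → EuclideanSpace ℝ (Fin n)) : Prop :=
  ContinuousOn x (Set.Icc (-τ) T) ∧
  (∀ t ∈ Set.Icc (-τ) (0:ℝ), x t = φ t) ∧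
  (∀ t ∈ Set.Icc (0:ℝ) T, x t =
    φ 0 + (Real.Gamma α)⁻¹ •
      ∫ s in Set.Ioc (0:ℝ) t, ((t - s) ^ (α - 1)) • G s (x s) (x (s - τ)))

section AbelKernel

variable {α : ℝ}

theorem integrableOn_sub_rpow (hα : 0 < α) (a b c : ℝ) :
    IntegrableOn (fun s => (c - s) ^ (α - 1)) (Ioc a b) := by
  have := (intervalIntegral.intervalIntegrable_rpow' (r := α - 1) (a := c - b) (b := c - a)
    (by linarith)).comp_sub_left c
  simp only [sub_sub_cancel] at this
  exact this.symm.1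

theorem integral_sub_rpow (hα : 0 < α) {a b : ℝ} (hab : a ≤ b) (c : ℝ) :
    ∫ s in Ioc a b, (c - s) ^ (α - 1) = ((c - a) ^ α - (c - b) ^ α) / α := by
  rw [← intervalIntegral.integral_of_le hab, intervalIntegral.integral_comp_sub_left
    (fun x : ℝ => x ^ (α - 1)) c, integral_rpow (Or.inl (by linarith))]
  ring_nf

theorem integral_sub_rpow_mul_exp_le (hα : 0 < α) {l t : ℝ} (hl : 0 < l) (ht : 0 ≤ t) :
    ∫ s in Ioc 0 t, (t - s) ^ (α - 1) * exp (l * s) ≤ Gamma α / l ^ α * exp (l * t) := by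
  have hsubst : ∫ s in Ioc 0 t, (t - s) ^ (α - 1) * exp (l * s)
      = exp (l * t) * ∫ u in Ioc 0 t, u ^ (α - 1) * exp (-(l * u)) := by
    rw [← integral_const_mul, ← intervalIntegral.integral_of_le ht,
      ← intervalIntegral.integral_of_le ht]
    have := intervalIntegral.integral_comp_sub_left
      (fun u : ℝ => exp (l * t) * (u ^ (α - 1) * exp (-(l * u)))) (a := 0) (b := t) t
    simp only [sub_zero, sub_self] at this
    rw [← this]
    congr 1 with s
    rw [mul_left_comm, ← exp_add]; ring_nf
  have hGamma : ∫ u in Ioi 0, u ^ (α - 1) * exp (-(l * u)) = Gamma α / l ^ α := by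
    rw [integral_rpow_mul_exp_neg_mul_Ioi hα hl, div_rpow zero_le_one hl.le, one_rpow]; ring
  have hmono : ∫ u in Ioc 0 t, u ^ (α - 1) * exp (-(l * u))
      ≤ ∫ u in Ioi 0, u ^ (α - 1) * exp (-(l * u)) := by
    refine setIntegral_mono_set ?_ ?_ Ioc_subset_Ioi_self.eventuallyLE
    · simpa using integrableOn_rpow_mul_exp_neg_mul_rpow (s := α - 1) (p := 1) (by linarith)
        one_pos hl
    · filter_upwards [ae_restrict_mem measurableSet_Ioi] with u (hu : 0 < u)
      positivity
  rw [hsubst, mul_comm _ (exp _), ← hGamma]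
  gcongr

end AbelKernel

theorem continuousOn_of_norm_sub_le_rpow {E : Type*} [SeminormedAddCommGroup E] {f : ℝ → E}
    {s : Set ℝ} {C β : ℝ} (hβ : 0 < β)
    (hf : ∀ x ∈ s, ∀ y ∈ s, x ≤ y → ‖f y - f x‖ ≤ C * (y - x) ^ β) : ContinuousOn f s := by
  intro x hx
  rw [ContinuousWithinAt, tendsto_iff_norm_sub_tendsto_zero]
  have hlim : Filter.Tendsto (fun y => C * |y - x| ^ β) (nhdsWithin x s) (nhds 0) := by
    refine tendsto_nhdsWithin_of_tendsto_nhds ?_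
    have : Continuous fun y : ℝ => C * |y - x| ^ β := by fun_prop (disch := exact hβ.le)
    simpa [zero_rpow hβ.ne'] using this.tendsto x
  refine squeeze_zero' (.of_forall fun _ => norm_nonneg _)
    (eventually_nhdsWithin_of_forall fun y hy => ?_) hlim
  rcases le_total x y with hxy | hyx
  · rw [abs_of_nonneg (sub_nonneg.2 hxy)]
    exact hf x hx y hy hxy
  · rw [norm_sub_rev, abs_sub_comm, abs_of_nonneg (sub_nonneg.2 hyx)]
    exact hf y hy x hx hyx

section RiemannLiouville

variable {E : Type*} [NormedAddCommGroup E] [NormedSpace ℝ E] {α : ℝ}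

noncomputable def riemannLiouville (α : ℝ) (u : ℝ → E) (t : ℝ) : E :=
  (Gamma α)⁻¹ • ∫ s in Ioc 0 t, (t - s) ^ (α - 1) • u s

theorem riemannLiouville_of_nonpos (u : ℝ → E) {t : ℝ} (ht : t ≤ 0) :
    riemannLiouville α u t = 0 := by
  simp [riemannLiouville, Ioc_eq_empty (not_lt.2 ht)]

theorem integrableOn_sub_rpow_smul (hα : 0 < α) {u : ℝ → E} {a b : ℝ}
    (hu : ContinuousOn u (Icc a b)) (c : ℝ) :
    IntegrableOn (fun s => (c - s) ^ (α - 1) • u s) (Ioc a b) :=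
  (integrableOn_sub_rpow hα a b c).smul_continuousOn_of_subset hu measurableSet_Ioc
    isCompact_Icc Ioc_subset_Icc_self

theorem riemannLiouville_sub (hα : 0 < α) {u v : ℝ → E} {t : ℝ}
    (hu : ContinuousOn u (Icc 0 t)) (hv : ContinuousOn v (Icc 0 t)) :
    riemannLiouville α u t - riemannLiouville α v t = riemannLiouville α (u - v) t := by
  rw [riemannLiouville, riemannLiouville, riemannLiouville, ← smul_sub,
    ← integral_sub (integrableOn_sub_rpow_smul hα hu t) (integrableOn_sub_rpow_smul hα hv t)]
  simp only [Pi.sub_apply, smul_sub]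

theorem norm_setIntegral_sub_rpow_smul_le (hα : 0 < α) {u : ℝ → E} {w : ℝ → ℝ} {a b c : ℝ}
    (hbc : b ≤ c) (hw : ContinuousOn w (Icc a b)) (huw : ∀ s ∈ Ioc a b, ‖u s‖ ≤ w s) :
    ‖∫ s in Ioc a b, (c - s) ^ (α - 1) • u s‖ ≤ ∫ s in Ioc a b, (c - s) ^ (α - 1) * w s := by
  refine norm_integral_le_of_norm_le (integrableOn_sub_rpow_smul hα hw c) ?_
  filter_upwards [ae_restrict_mem measurableSet_Ioc] with s hs
  have hk : 0 ≤ (c - s) ^ (α - 1) := rpow_nonneg (by linarith [hs.2]) _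
  rw [norm_smul, norm_of_nonneg hk]
  exact mul_le_mul_of_nonneg_left (huw s hs) hk

theorem norm_setIntegral_sub_rpow_sub_smul_le (hα : 0 < α) (hα1 : α ≤ 1) {u : ℝ → E}
    {a b c M : ℝ} (hab : a ≤ b) (hbc : b ≤ c) (hM0 : 0 ≤ M)
    (hM : ∀ s ∈ Ioc a b, ‖u s‖ ≤ M) :
    ‖∫ s in Ioc a b, ((c - s) ^ (α - 1) - (b - s) ^ (α - 1)) • u s‖ ≤ M * (c - b) ^ α / α := by
  have hk : IntegrableOn (fun s => (b - s) ^ (α - 1) - (c - s) ^ (α - 1)) (Ioc a b) :=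
    (integrableOn_sub_rpow hα a b b).sub (integrableOn_sub_rpow hα a b c)
  calc ‖∫ s in Ioc a b, ((c - s) ^ (α - 1) - (b - s) ^ (α - 1)) • u s‖
      = ‖∫ s in Ioo a b, ((c - s) ^ (α - 1) - (b - s) ^ (α - 1)) • u s‖ := by
        rw [integral_Ioc_eq_integral_Ioo]
    _ ≤ ∫ s in Ioo a b, ((b - s) ^ (α - 1) - (c - s) ^ (α - 1)) * M := by
        refine norm_integral_le_of_norm_le ((hk.mono_set Ioo_subset_Ioc_self).mul_const M) ?_
        filter_upwards [ae_restrict_mem measurableSet_Ioo] with s hs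
        have hdec : (c - s) ^ (α - 1) ≤ (b - s) ^ (α - 1) :=
          rpow_le_rpow_of_nonpos (by linarith [hs.2]) (by linarith) (by linarith)
        rw [norm_smul, norm_of_nonpos (by linarith), neg_sub]
        exact mul_le_mul_of_nonneg_left (hM s (Ioo_subset_Ioc_self hs)) (by linarith)
    _ = M * (((b - a) ^ α - (c - a) ^ α + (c - b) ^ α) / α) := by
        rw [integral_Ioc_eq_integral_Ioo.symm, integral_mul_const, integral_sub
          (integrableOn_sub_rpow hα a b b) (integrableOn_sub_rpow hα a b c),
          integral_sub_rpow hα hab, integral_sub_rpow hα hab, sub_self, zero_rpow hα.ne']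
        ring
    _ ≤ M * (c - b) ^ α / α := by
        have : (b - a) ^ α ≤ (c - a) ^ α := rpow_le_rpow (by linarith) (by linarith) hα.le
        rw [mul_div_assoc]
        gcongr
        linarith

theorem norm_riemannLiouville_sub_le (hα : 0 < α) (hα1 : α ≤ 1) {u : ℝ → E} {t₁ t₂ M : ℝ}
    (h₀₁ : 0 ≤ t₁) (h₁₂ : t₁ ≤ t₂) (hu : ContinuousOn u (Icc 0 t₂)) (hM0 : 0 ≤ M)
    (hM : ∀ s ∈ Ioc 0 t₂, ‖u s‖ ≤ M) :
    ‖riemannLiouville α u t₂ - riemannLiouville α u t₁‖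
      ≤ 2 * M / Gamma (α + 1) * (t₂ - t₁) ^ α := by
  have hu₁ : ContinuousOn u (Icc 0 t₁) := hu.mono (Icc_subset_Icc_right h₁₂)
  have hu₁₂ : ContinuousOn u (Icc t₁ t₂) := hu.mono (Icc_subset_Icc_left h₀₁)
  have hsplit : ∫ s in Ioc 0 t₂, (t₂ - s) ^ (α - 1) • u s
      = (∫ s in Ioc 0 t₁, (t₂ - s) ^ (α - 1) • u s)
        + ∫ s in Ioc t₁ t₂, (t₂ - s) ^ (α - 1) • u s := by
    rw [← Ioc_union_Ioc_eq_Ioc h₀₁ h₁₂]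
    exact setIntegral_union (Ioc_disjoint_Ioc_of_le le_rfl) measurableSet_Ioc
      (integrableOn_sub_rpow_smul hα hu₁ t₂) (integrableOn_sub_rpow_smul hα hu₁₂ t₂)
  have hdiff : riemannLiouville α u t₂ - riemannLiouville α u t₁
      = (Gamma α)⁻¹ • ((∫ s in Ioc 0 t₁, ((t₂ - s) ^ (α - 1) - (t₁ - s) ^ (α - 1)) • u s)
        + ∫ s in Ioc t₁ t₂, (t₂ - s) ^ (α - 1) • u s) := by
    simp only [riemannLiouville, sub_smul]
    rw [hsplit, integral_sub (integrableOn_sub_rpow_smul hα hu₁ t₂)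
      (integrableOn_sub_rpow_smul hα hu₁ t₁)]
    module
  have hnear : ‖∫ s in Ioc t₁ t₂, (t₂ - s) ^ (α - 1) • u s‖ ≤ M * (t₂ - t₁) ^ α / α := by
    refine (norm_setIntegral_sub_rpow_smul_le hα le_rfl continuousOn_const
      fun s hs => hM s (Ioc_subset_Ioc_left h₀₁ hs)).trans_eq ?_
    rw [integral_mul_const, integral_sub_rpow hα h₁₂, sub_self, zero_rpow hα.ne']
    ring
  have hfar := norm_setIntegral_sub_rpow_sub_smul_le hα hα1 (u := u) h₀₁ h₁₂ hM0
    fun s hs => hM s (Ioc_subset_Ioc_right h₁₂ hs)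
  rw [hdiff, norm_smul, norm_inv, norm_of_nonneg (Gamma_pos_of_pos hα).le,
    Gamma_add_one hα.ne']
  calc (Gamma α)⁻¹ * ‖(∫ s in Ioc 0 t₁, ((t₂ - s) ^ (α - 1) - (t₁ - s) ^ (α - 1)) • u s)
        + ∫ s in Ioc t₁ t₂, (t₂ - s) ^ (α - 1) • u s‖
      ≤ (Gamma α)⁻¹ * (M * (t₂ - t₁) ^ α / α + M * (t₂ - t₁) ^ α / α) := by
        gcongr
        exact (norm_add_le _ _).trans (add_le_add hfar hnear)
    _ = 2 * M / (α * Gamma α) * (t₂ - t₁) ^ α := by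
        field_simp
        ring

theorem continuousOn_riemannLiouville (hα : 0 < α) (hα1 : α ≤ 1) {u : ℝ → E} {T : ℝ}
    (hT : 0 ≤ T) (hu : ContinuousOn u (Icc 0 T)) :
    ContinuousOn (riemannLiouville α u) (Iic T) := by
  obtain ⟨M, hM⟩ := isCompact_Icc.exists_bound_of_continuousOn hu
  have hM0 : 0 ≤ M := (norm_nonneg _).trans (hM 0 ⟨le_rfl, hT⟩)
  have hHolder : ContinuousOn (riemannLiouville α u) (Icc 0 T) :=
    continuousOn_of_norm_sub_le_rpow hα fun t₁ h₁ t₂ h₂ h₁₂ =>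
      norm_riemannLiouville_sub_le hα hα1 h₁.1 h₁₂ (hu.mono (Icc_subset_Icc_right h₂.2)) hM0
        fun s hs => hM s ⟨hs.1.le, hs.2.trans h₂.2⟩
  have hmax : riemannLiouville α u = fun t => riemannLiouville α u (max t 0) := by
    ext t
    rcases le_total t 0 with ht | ht
    · rw [max_eq_right ht, riemannLiouville_of_nonpos u ht, riemannLiouville_of_nonpos u le_rfl]
    · rw [max_eq_left ht]
  rw [hmax]
  exact hHolder.comp (continuous_id.max continuous_const).continuousOn
    fun t ht => ⟨le_max_right _ _, max_le ht hT⟩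

theorem norm_riemannLiouville_le_of_norm_le_exp (hα : 0 < α) {d : ℝ → E} {t C l : ℝ}
    (hl : 0 < l) (hC : 0 ≤ C) (hbd : ∀ s ∈ Ioc 0 t, ‖d s‖ ≤ C * exp (l * s)) :
    ‖riemannLiouville α d t‖ ≤ C / l ^ α * exp (l * t) := by
  rcases le_total t 0 with ht | ht
  · rw [riemannLiouville_of_nonpos d ht, norm_zero]
    positivity
  have hΓ := Gamma_pos_of_pos hα
  have hexp : ContinuousOn (fun s => C * exp (l * s)) (Icc 0 t) := by fun_prop
  rw [riemannLiouville, norm_smul, norm_inv, norm_of_nonneg hΓ.le]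
  calc (Gamma α)⁻¹ * ‖∫ s in Ioc 0 t, (t - s) ^ (α - 1) • d s‖
      ≤ (Gamma α)⁻¹ * ∫ s in Ioc 0 t, (t - s) ^ (α - 1) * (C * exp (l * s)) := by
        gcongr
        exact norm_setIntegral_sub_rpow_smul_le hα le_rfl hexp hbd
    _ = (Gamma α)⁻¹ * C * ∫ s in Ioc 0 t, (t - s) ^ (α - 1) * exp (l * s) := by
        rw [mul_assoc, ← integral_const_mul C]
        congr 1
        exact setIntegral_congr_fun measurableSet_Ioc fun s _ => by ring
    _ ≤ (Gamma α)⁻¹ * C * (Gamma α / l ^ α * exp (l * t)) := by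
        gcongr
        exact integral_sub_rpow_mul_exp_le hα hl ht
    _ = C / l ^ α * exp (l * t) := by
        field_simp

end RiemannLiouville

theorem existsUnique_isFixedPt_of_contractingWith_conj {X Y : Type*} [MetricSpace Y]
    [CompleteSpace Y] [Nonempty Y] {K : NNReal} (e : X ≃ Y) {f : X → X}
    (hf : ContractingWith K (e ∘ f ∘ e.symm)) : ∃! x, Function.IsFixedPt f x := by
  have hconj : ∀ x, Function.IsFixedPt f x ↔ Function.IsFixedPt (e ∘ f ∘ e.symm) (e x) := by
    simp [Function.IsFixedPt]
  refine ⟨e.symm (ContractingWith.fixedPoint _ hf), ?_, fun x hx => ?_⟩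
  · simpa [hconj] using hf.fixedPoint_isFixedPt
  · rw [← hf.fixedPoint_unique ((hconj x).1 hx), Equiv.symm_apply_apply]

section Bielecki

variable {E : Type*} [NormedAddCommGroup E] {a b : ℝ}

/-- `V` is `K`-Lipschitz for the Bielecki distance `sup_{t ∈ [a, b]} exp (-l t) ‖x t - y t‖`. -/
def BieleckiLipschitzOn (a b l K : ℝ) (V : (ℝ → E) → ℝ → E) : Prop :=
  ∀ x y W, ContinuousOn x (Icc a b) → ContinuousOn y (Icc a b) → 0 ≤ W →
    (∀ s ∈ Icc a b, ‖x s - y s‖ ≤ W * exp (l * s)) →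
    ∀ t ∈ Icc a b, ‖V x t - V y t‖ ≤ K * W * exp (l * t)

variable [NormedSpace ℝ E]

noncomputable def expWeight (l : ℝ) : C(Icc a b, E) ≃ C(Icc a b, E) where
  toFun f := ⟨fun t => exp (-(l * t)) • f t, by fun_prop⟩
  invFun f := ⟨fun t => exp (l * t) • f t, by fun_prop⟩
  left_inv f := by ext t; simp [smul_smul, ← exp_add]
  right_inv f := by ext t; simp [smul_smul, ← exp_add]

theorem dist_expWeight_le_iff {l W : ℝ} (hW : 0 ≤ W) (f g : C(Icc a b, E)) :
    dist (expWeight l f) (expWeight l g) ≤ W ↔ ∀ t : Icc a b, ‖f t - g t‖ ≤ W * exp (l * t) := by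
  rw [ContinuousMap.dist_le hW]
  refine forall_congr' fun t => ?_
  rw [dist_eq_norm]
  simp only [expWeight, Equiv.coe_fn_mk, ContinuousMap.coe_mk, ← smul_sub, norm_smul]
  rw [norm_of_nonneg (exp_pos _).le, exp_neg, inv_mul_le_iff₀ (exp_pos _), mul_comm]

noncomputable def intervalOperator (hab : a ≤ b) (V : (ℝ → E) → ℝ → E)
    (hV : ∀ x, ContinuousOn x (Icc a b) → ContinuousOn (V x) (Icc a b)) (f : C(Icc a b, E)) :
    C(Icc a b, E) :=
  ⟨(Icc a b).domRestrict (V (IccExtend hab f)),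
    (hV _ (continuous_IccExtend_iff.2 f.continuous).continuousOn).domRestrict⟩

theorem contractingWith_expWeight_conj_intervalOperator (hab : a ≤ b) {V : (ℝ → E) → ℝ → E}
    (hV : ∀ x, ContinuousOn x (Icc a b) → ContinuousOn (V x) (Icc a b)) {K l : ℝ}
    (hK0 : 0 ≤ K) (hK : K < 1)
    (hVK : BieleckiLipschitzOn a b l K V) :
    ContractingWith ⟨K, hK0⟩
      (expWeight l ∘ intervalOperator hab V hV ∘ (expWeight l).symm) := by
  refine ⟨hK, LipschitzWith.of_dist_le_mul fun u v => ?_⟩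
  obtain ⟨f, rfl⟩ := (expWeight (E := E) l).surjective u
  obtain ⟨g, rfl⟩ := (expWeight (E := E) l).surjective v
  set W := dist (expWeight l f) (expWeight l g)
  have hfg := (dist_expWeight_le_iff (l := l) dist_nonneg f g).1 le_rfl
  simp only [Function.comp_apply, Equiv.symm_apply_apply]
  change _ ≤ K * W
  refine (dist_expWeight_le_iff (by positivity) _ _).2 fun t => ?_
  have hext : ∀ s ∈ Icc a b, ‖IccExtend hab f s - IccExtend hab g s‖ ≤ W * exp (l * s) :=
    fun s hs => by simpa [IccExtend_of_mem _ _ hs] using hfg ⟨s, hs⟩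
  simpa [intervalOperator, mul_assoc] using hVK _ _ W
    (continuous_IccExtend_iff.2 f.continuous).continuousOn
    (continuous_IccExtend_iff.2 g.continuous).continuousOn dist_nonneg hext t t.2

theorem existsUnique_eqOn_of_bielecki_contraction [CompleteSpace E] (hab : a ≤ b)
    {V : (ℝ → E) → ℝ → E} (hV : ∀ x, ContinuousOn x (Icc a b) → ContinuousOn (V x) (Icc a b))
    {K l : ℝ} (hK0 : 0 ≤ K) (hK : K < 1)
    (hVK : BieleckiLipschitzOn a b l K V) :
    ∃ x, (ContinuousOn x (Icc a b) ∧ EqOn x (V x) (Icc a b)) ∧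
      ∀ y, ContinuousOn y (Icc a b) → EqOn y (V y) (Icc a b) → EqOn y x (Icc a b) := by
  obtain ⟨f, hf, hf_unique⟩ := existsUnique_isFixedPt_of_contractingWith_conj _
    (contractingWith_expWeight_conj_intervalOperator hab hV hK0 hK hVK)
  have hVlocal {x y : ℝ → E} (hx : ContinuousOn x (Icc a b)) (hy : ContinuousOn y (Icc a b))
      (hxy : EqOn x y (Icc a b)) : EqOn (V x) (V y) (Icc a b) := fun t ht => by
    refine norm_sub_eq_zero_iff.1 (le_antisymm ?_ (norm_nonneg _))
    simpa using hVK x y 0 hx hy le_rfl (fun s hs => by simp [hxy hs]) t ht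
  refine ⟨IccExtend hab f, ⟨(continuous_IccExtend_iff.2 f.continuous).continuousOn,
    fun t ht => ?_⟩, fun y hy hyV t ht => ?_⟩
  · calc IccExtend hab f t = f ⟨t, ht⟩ := IccExtend_of_mem _ _ ht
      _ = intervalOperator hab V hV f ⟨t, ht⟩ := by rw [hf]
  · set g : C(Icc a b, E) := ⟨(Icc a b).domRestrict y, hy.domRestrict⟩
    have hgy : EqOn (IccExtend hab g) y (Icc a b) := fun s hs => IccExtend_of_mem _ _ hs
    have hg : Function.IsFixedPt (intervalOperator hab V hV) g := by
      ext p
      exact (hVlocal (continuous_IccExtend_iff.2 g.continuous).continuousOn hy hgy p.2).trans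
        (hyV p.2).symm
    calc y t = g ⟨t, ht⟩ := rfl
      _ = IccExtend hab f t := by rw [hf_unique g hg, IccExtend_of_mem _ _ ht]

end Bielecki

theorem continuousOn_delay_comp {E : Type*} [TopologicalSpace E] {τ T : ℝ}
    {G : ℝ → E → E → E} (hτ : 0 ≤ τ)
    (hGc : ContinuousOn (fun p : ℝ × E × E => G p.1 p.2.1 p.2.2) (Icc 0 T ×ˢ (univ ×ˢ univ)))
    {x : ℝ → E} (hx : ContinuousOn x (Icc (-τ) T)) :
    ContinuousOn (fun s => G s (x s) (x (s - τ))) (Icc 0 T) := by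
  have hnow : ContinuousOn x (Icc 0 T) := hx.mono fun s hs => ⟨by linarith [hs.1], hs.2⟩
  have hdelayed : ContinuousOn (fun s => x (s - τ)) (Icc 0 T) :=
    hx.comp (continuousOn_id.sub continuousOn_const)
      fun s hs => ⟨by linarith [hs.1], by linarith [hs.2]⟩
  exact hGc.comp (continuousOn_id.prodMk (hnow.prodMk hdelayed))
    fun s hs => ⟨hs, trivial, trivial⟩

section DelayVolterra

variable {E : Type*} [NormedAddCommGroup E] [NormedSpace ℝ E] {τ T α L : ℝ} {φ : ℝ → E}
  {G : ℝ → E → E → E}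

/-- For `t ≤ 0` the integral term vanishes, so this is the history `φ` on `[-τ, 0]`. -/
noncomputable def volterraOperator (τ α : ℝ) (φ : ℝ → E) (G : ℝ → E → E → E) (x : ℝ → E)
    (t : ℝ) : E :=
  φ (min t 0) + riemannLiouville α (fun s => G s (x s) (x (s - τ))) t

theorem isVolterraSolution_iff {n : ℕ} {φ : ℝ → EuclideanSpace ℝ (Fin n)}
    {G : ℝ → EuclideanSpace ℝ (Fin n) → EuclideanSpace ℝ (Fin n) → EuclideanSpace ℝ (Fin n)}
    {x : ℝ → EuclideanSpace ℝ (Fin n)} (hτ : 0 ≤ τ) (hT : 0 ≤ T) :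
    IsVolterraSolution T τ α φ G x ↔
      ContinuousOn x (Icc (-τ) T) ∧ EqOn x (volterraOperator τ α φ G x) (Icc (-τ) T) := by
  refine and_congr_right fun _ => ⟨fun ⟨hhist, heq⟩ t ht => ?_, fun h => ⟨fun t ht => ?_, ?_⟩⟩
  · rcases le_total t 0 with ht0 | ht0
    · rw [volterraOperator, min_eq_left ht0, riemannLiouville_of_nonpos _ ht0, add_zero]
      exact hhist t ⟨ht.1, ht0⟩
    · rw [volterraOperator, min_eq_right ht0]
      exact heq t ⟨ht0, ht.2⟩
  · rw [h ⟨ht.1, ht.2.trans hT⟩, volterraOperator, min_eq_left ht.2,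
      riemannLiouville_of_nonpos _ ht.2, add_zero]
  · intro t ht
    rw [h ⟨by linarith [ht.1], ht.2⟩, volterraOperator, min_eq_right ht.1]
    rfl

theorem continuousOn_volterraOperator (hτ : 0 ≤ τ) (hT : 0 ≤ T) (hα : 0 < α) (hα1 : α ≤ 1)
    (hφ : ContinuousOn φ (Icc (-τ) 0))
    (hGc : ContinuousOn (fun p : ℝ × E × E => G p.1 p.2.1 p.2.2) (Icc 0 T ×ˢ (univ ×ˢ univ)))
    {x : ℝ → E} (hx : ContinuousOn x (Icc (-τ) T)) :
    ContinuousOn (volterraOperator τ α φ G x) (Icc (-τ) T) :=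
  (hφ.comp (continuous_id.min continuous_const).continuousOn
      fun t ht => ⟨le_min ht.1 (by linarith), min_le_right _ _⟩).add
    ((continuousOn_riemannLiouville hα hα1 hT (continuousOn_delay_comp hτ hGc hx)).mono
      Icc_subset_Iic_self)

theorem bieleckiLipschitzOn_volterraOperator (hτ : 0 ≤ τ) (hα : 0 < α) (hL : 0 ≤ L)
    (hGc : ContinuousOn (fun p : ℝ × E × E => G p.1 p.2.1 p.2.2) (Icc 0 T ×ˢ (univ ×ˢ univ)))
    (hGL : ∀ t ∈ Icc 0 T, ∀ u₁ v₁ u₂ v₂, ‖G t u₁ v₁ - G t u₂ v₂‖ ≤ L * (‖u₁ - u₂‖ + ‖v₁ - v₂‖))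
    {l : ℝ} (hl : 0 < l) :
    BieleckiLipschitzOn (-τ) T l (2 * L / l ^ α) (volterraOperator τ α φ G) := by
  intro x y W hx hy hW hxy t ht
  rw [volterraOperator, volterraOperator, add_sub_add_left_eq_sub,
    riemannLiouville_sub hα ((continuousOn_delay_comp hτ hGc hx).mono (Icc_subset_Icc_right ht.2))
      ((continuousOn_delay_comp hτ hGc hy).mono (Icc_subset_Icc_right ht.2))]
  refine (norm_riemannLiouville_le_of_norm_le_exp hα hl (by positivity : 0 ≤ 2 * L * W)
    fun s hs => ?_).trans_eq (by ring)
  have hsT : s ∈ Icc 0 T := ⟨hs.1.le, hs.2.trans ht.2⟩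
  calc ‖G s (x s) (x (s - τ)) - G s (y s) (y (s - τ))‖
      ≤ L * (‖x s - y s‖ + ‖x (s - τ) - y (s - τ)‖) := hGL s hsT _ _ _ _
    _ ≤ L * (W * exp (l * s) + W * exp (l * (s - τ))) := by
        gcongr
        · exact hxy s ⟨by linarith [hsT.1], hsT.2⟩
        · exact hxy (s - τ) ⟨by linarith [hsT.1], by linarith [hsT.2]⟩
    _ ≤ L * (W * exp (l * s) + W * exp (l * s)) := by
        gcongr
        linarith
    _ = 2 * L * W * exp (l * s) := by ring

end DelayVolterra

theorem exists_unique_volterra_solution_general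
    (n : ℕ) (T τ α L : ℝ) (hT : 0 < T) (hτ : 0 < τ)
    (hα : α ∈ Set.Ioc (0:ℝ) 1)
    (φ : ℝ → EuclideanSpace ℝ (Fin n))
    (hφ : ContinuousOn φ (Set.Icc (-τ) (0:ℝ)))
    (G : ℝ → EuclideanSpace ℝ (Fin n) → EuclideanSpace ℝ (Fin n) →
      EuclideanSpace ℝ (Fin n))
    (hGc : ContinuousOn
      (fun p : ℝ × EuclideanSpace ℝ (Fin n) × EuclideanSpace ℝ (Fin n) =>
        G p.1 p.2.1 p.2.2)
      (Set.Icc (0:ℝ) T ×ˢ (Set.univ ×ˢ Set.univ)))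
    (hGL : ∀ t ∈ Set.Icc (0:ℝ) T, ∀ u₁ v₁ u₂ v₂,
      ‖G t u₁ v₁ - G t u₂ v₂‖ ≤ L * (‖u₁ - u₂‖ + ‖v₁ - v₂‖)) :
    (∃ x : ℝ → EuclideanSpace ℝ (Fin n), IsVolterraSolution T τ α φ G x) ∧
    (∀ x₁ x₂ : ℝ → EuclideanSpace ℝ (Fin n),
      IsVolterraSolution T τ α φ G x₁ → IsVolterraSolution T τ α φ G x₂ →
      Set.EqOn x₁ x₂ (Set.Icc (-τ) T)) := by
  obtain ⟨hα0, hα1⟩ := hα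
  set L' := max L 0
  have hL' : 0 ≤ L' := le_max_right L 0
  have hGL' : ∀ t ∈ Icc 0 T, ∀ u₁ v₁ u₂ v₂,
      ‖G t u₁ v₁ - G t u₂ v₂‖ ≤ L' * (‖u₁ - u₂‖ + ‖v₁ - v₂‖) := fun t ht u₁ v₁ u₂ v₂ =>
    (hGL t ht u₁ v₁ u₂ v₂).trans (by gcongr; exact le_max_left L 0)
  -- with `l ^ α = 4 L' + 1` the Bielecki constant `2 L' / l ^ α` is below `1`
  set l := (4 * L' + 1) ^ α⁻¹
  have hl : 0 < l := by positivity
  have hlα : l ^ α = 4 * L' + 1 := rpow_inv_rpow (by positivity) hα0.ne'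
  obtain ⟨x, hx, hx_unique⟩ := existsUnique_eqOn_of_bielecki_contraction (by linarith)
    (fun x hx => continuousOn_volterraOperator hτ.le hT.le hα0 hα1 hφ hGc hx)
    (K := 2 * L' / l ^ α) (by positivity) (by rw [hlα, div_lt_one (by positivity)]; linarith)
    (bieleckiLipschitzOn_volterraOperator hτ.le hα0 hL' hGc hGL' hl)
  simp only [isVolterraSolution_iff hτ.le hT.le]
  exact ⟨⟨x, hx⟩, fun x₁ x₂ h₁ h₂ =>
    (hx_unique x₁ h₁.1 h₁.2).trans (hx_unique x₂ h₂.1 h₂.2).symm⟩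

/-- **Existence and uniqueness for the delayed fractional Volterra equation.**
With `G` continuous and globally Lipschitz in its last two arguments, there is
a continuous solution of
`x(t) = φ(0) + (1/Γ(α)) ∫₀ᵗ (t-s)^(α-1) G(s, x(s), x(s-τ)) ds`, `x = φ` on
`[-τ,0]`, and any two solutions agree on `[-τ,T]`. -/
theorem exists_unique_volterra_solution
    (n : ℕ) (hn : 1 ≤ n) (T τ α L : ℝ) (hT : 0 < T) (hτ : 0 < τ)
    (hα : α ∈ Set.Ioc (0:ℝ) 1)
    (φ : ℝ → EuclideanSpace ℝ (Fin n))
    (hφ : ContinuousOn φ (Set.Icc (-τ) (0:ℝ)))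
    (G : ℝ → EuclideanSpace ℝ (Fin n) → EuclideanSpace ℝ (Fin n) →
      EuclideanSpace ℝ (Fin n))
    (hGc : ContinuousOn
      (fun p : ℝ × EuclideanSpace ℝ (Fin n) × EuclideanSpace ℝ (Fin n) =>
        G p.1 p.2.1 p.2.2)
      (Set.Icc (0:ℝ) T ×ˢ (Set.univ ×ˢ Set.univ)))
    (hGL : ∀ t ∈ Set.Icc (0:ℝ) T, ∀ u₁ v₁ u₂ v₂,
      ‖G t u₁ v₁ - G t u₂ v₂‖ ≤ L * (‖u₁ - u₂‖ + ‖v₁ - v₂‖)) :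
    (∃ x : ℝ → EuclideanSpace ℝ (Fin n), IsVolterraSolution T τ α φ G x) ∧
    (∀ x₁ x₂ : ℝ → EuclideanSpace ℝ (Fin n),
      IsVolterraSolution T τ α φ G x₁ → IsVolterraSolution T τ α φ G x₂ →
      Set.EqOn x₁ x₂ (Set.Icc (-τ) T)) :=
  exists_unique_volterra_solution_general n T τ α L hT hτ hα φ hφ G hGc hGL
end

section
/- Let T > 0, α ∈ (0,1], L ≥ 0 and ε ≥ 0. Let e : [0, T] → ℝ be continuous and nonnegative and suppose that for all t ∈ [0, T], e(t) ≤ (L/Γ(α)) ∫₀ᵗ (t-s)^{α-1} e(s) ds + ε T^α / Γ(α+1). Then there exists a constant C > 0, depending only on L, α and T (and not on ε or e), such that e(t) ≤ C ε for all t ∈ [0, T]. -/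
open MeasureTheory Set Real

/-!
Bielecki's weighted norm. Since `∫₀ᵗ (t-s)^(α-1) e^{rs} ds ≤ e^{rt} Γ(α) / r^α`, the Volterra
operator with kernel `(L/Γ(α)) (t-s)^(α-1)` has norm at most `L / r^α` for the sup norm weighted
by `e^{-rt}`. Taking `r^α = 2L + 1` makes it a contraction of ratio `1/2`, so the weighted sup `M`
of `e` satisfies `M ≤ M/2 + b` with `b = ε T^α / Γ(α+1)`; hence `e(t) ≤ 2 b e^{rT}`.
-/

lemma setIntegral_Ioc_rpow_mul_exp_neg_mul_le {a r t : ℝ} (ha : 0 < a) (hr : 0 < r) :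
    ∫ u in Ioc 0 t, u ^ (a - 1) * exp (-(r * u)) ≤ (1 / r) ^ a * Gamma a := by
  rw [← integral_rpow_mul_exp_neg_mul_Ioi ha hr]
  refine setIntegral_mono_set ?_ ?_ Ioc_subset_Ioi_self.eventuallyLE
  · simpa [rpow_one, neg_mul] using
      integrableOn_rpow_mul_exp_neg_mul_rpow (s := a - 1) (p := 1) (by linarith) one_pos hr
  · filter_upwards [ae_restrict_mem measurableSet_Ioi] with u (hu : 0 < u)
    exact mul_nonneg (rpow_nonneg hu.le _) (exp_pos _).le

lemma integrableOn_sub_rpow_mul_exp {a r t : ℝ} (ha : 0 < a) (ht : 0 ≤ t) :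
    IntegrableOn (fun s => (t - s) ^ (a - 1) * exp (r * s)) (Ioc 0 t) := by
  have hker : IntervalIntegrable (fun s => (t - s) ^ (a - 1)) volume 0 t := by
    simpa using ((intervalIntegral.intervalIntegrable_rpow' (a := 0) (b := t)
      (by linarith : -1 < a - 1)).comp_sub_left t).symm
  exact (intervalIntegrable_iff_integrableOn_Ioc_of_le ht).mp
    (hker.mul_continuousOn (by fun_prop))

lemma setIntegral_sub_rpow_mul_exp_le {a r t : ℝ} (ha : 0 < a) (hr : 0 < r) (ht : 0 ≤ t) :
    ∫ s in Ioc 0 t, (t - s) ^ (a - 1) * exp (r * s)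
      ≤ exp (r * t) * ((1 / r) ^ a * Gamma a) := by
  have hsub : ∀ s, (t - s) ^ (a - 1) * exp (r * s)
      = exp (r * t) * ((t - s) ^ (a - 1) * exp (-(r * (t - s)))) := fun s => by
    rw [mul_left_comm, ← exp_add]; ring_nf
  calc ∫ s in Ioc 0 t, (t - s) ^ (a - 1) * exp (r * s)
      = exp (r * t) * ∫ u in Ioc 0 t, u ^ (a - 1) * exp (-(r * u)) := by
        simp_rw [← intervalIntegral.integral_of_le ht, hsub, intervalIntegral.integral_const_mul,
          intervalIntegral.integral_comp_sub_left (fun u => u ^ (a - 1) * exp (-(r * u))) t,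
          sub_self, sub_zero]
    _ ≤ exp (r * t) * ((1 / r) ^ a * Gamma a) := by
        gcongr
        exact setIntegral_Ioc_rpow_mul_exp_neg_mul_le ha hr

lemma setIntegral_sub_rpow_mul_le_of_le_mul_exp {a r t M : ℝ} {e : ℝ → ℝ} (ha : 0 < a)
    (hr : 0 < r) (ht : 0 ≤ t) (hM : 0 ≤ M) (he0 : ∀ s ∈ Ioc 0 t, 0 ≤ e s)
    (he : ∀ s ∈ Ioc 0 t, e s ≤ M * exp (r * s)) :
    ∫ s in Ioc 0 t, (t - s) ^ (a - 1) * e s ≤ M * (exp (r * t) * ((1 / r) ^ a * Gamma a)) := by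
  calc ∫ s in Ioc 0 t, (t - s) ^ (a - 1) * e s
      ≤ ∫ s in Ioc 0 t, M * ((t - s) ^ (a - 1) * exp (r * s)) := by
        refine integral_mono_of_nonneg ?_ ((integrableOn_sub_rpow_mul_exp ha ht).const_mul M) ?_
        all_goals
          filter_upwards [ae_restrict_mem measurableSet_Ioc] with s hs
          have hts : 0 ≤ t - s := sub_nonneg.mpr hs.2
        · exact mul_nonneg (rpow_nonneg hts _) (he0 s hs)
        · rw [mul_left_comm]
          exact mul_le_mul_of_nonneg_left (he s hs) (rpow_nonneg hts _)
    _ ≤ M * (exp (r * t) * ((1 / r) ^ a * Gamma a)) := by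
        rw [integral_const_mul]
        gcongr
        exact setIntegral_sub_rpow_mul_exp_le ha hr ht

theorem fractional_gronwall_le_two_mul_mul_exp {T a K b r : ℝ} {e : ℝ → ℝ} (ha : 0 < a)
    (hK : 0 ≤ K) (hb : 0 ≤ b) (hr : 0 < r) (hKr : K * ((1 / r) ^ a * Gamma a) ≤ 1 / 2)
    (he : ContinuousOn e (Icc 0 T)) (he0 : ∀ t ∈ Icc 0 T, 0 ≤ e t)
    (h : ∀ t ∈ Icc 0 T, e t ≤ K * (∫ s in Ioc 0 t, (t - s) ^ (a - 1) * e s) + b) :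
    ∀ t ∈ Icc 0 T, e t ≤ 2 * b * exp (r * t) := by
  intro t ht
  obtain ⟨t₀, ht₀, hmax⟩ := isCompact_Icc.exists_isMaxOn ⟨t, ht⟩
    (he.mul (by fun_prop : Continuous fun s => exp (-(r * s))).continuousOn)
  set M := e t₀ * exp (-(r * t₀))
  have hM0 : 0 ≤ M := mul_nonneg (he0 t₀ ht₀) (exp_pos _).le
  have hle : ∀ s ∈ Icc 0 T, e s ≤ M * exp (r * s) := fun s hs => by
    rw [← div_le_iff₀ (exp_pos _), div_eq_mul_inv, ← exp_neg]
    exact hmax hs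
  have hweighted : ∀ s ∈ Icc 0 T, e s * exp (-(r * s)) ≤ M / 2 + b := fun s hs => by
    have hconv := setIntegral_sub_rpow_mul_le_of_le_mul_exp ha hr hs.1 hM0
      (fun u hu => he0 u ⟨hu.1.le, hu.2.trans hs.2⟩) (fun u hu => hle u ⟨hu.1.le, hu.2.trans hs.2⟩)
    have hexp : exp (r * s) * exp (-(r * s)) = 1 := by rw [← exp_add, add_neg_cancel, exp_zero]
    have hexp1 : exp (-(r * s)) ≤ 1 := exp_le_one_iff.mpr (neg_nonpos.mpr (mul_nonneg hr.le hs.1))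
    calc e s * exp (-(r * s))
        ≤ (K * (M * (exp (r * s) * ((1 / r) ^ a * Gamma a))) + b) * exp (-(r * s)) := by
          gcongr
          exact (h s hs).trans (add_le_add (mul_le_mul_of_nonneg_left hconv hK) le_rfl)
      _ = K * ((1 / r) ^ a * Gamma a) * M + b * exp (-(r * s)) := by
          linear_combination (K * M * ((1 / r) ^ a * Gamma a)) * hexp
      _ ≤ M / 2 + b := by
          gcongr
          · linarith [mul_le_mul_of_nonneg_right hKr hM0]
          · exact mul_le_of_le_one_right hb hexp1
  have hM : M ≤ 2 * b := by linarith [hweighted t₀ ht₀]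
  calc e t ≤ M * exp (r * t) := hle t ht
    _ ≤ 2 * b * exp (r * t) := by gcongr

/-- **Scalar fractional Grönwall estimate for Ulam–Hyers stability.**
If a nonnegative continuous `e` satisfies
`e(t) ≤ (L/Γ(α)) ∫₀ᵗ (t-s)^(α-1) e(s) ds + ε T^α / Γ(α+1)` on `[0,T]`,
then `e(t) ≤ C ε` with `C` depending only on `L`, `α` and `T`. -/
theorem fractional_gronwall_ulam_hyers
    (T α L : ℝ) (hT : 0 < T) (hα : α ∈ Set.Ioc (0:ℝ) 1) (hL : 0 ≤ L) :
    ∃ C > 0, ∀ ε : ℝ, 0 ≤ ε → ∀ e : ℝ → ℝ,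
      ContinuousOn e (Set.Icc (0:ℝ) T) →
      (∀ t ∈ Set.Icc (0:ℝ) T, 0 ≤ e t) →
      (∀ t ∈ Set.Icc (0:ℝ) T, e t ≤
        (L / Real.Gamma α) * (∫ s in Set.Ioc (0:ℝ) t, (t - s) ^ (α - 1) * e s)
          + ε * T ^ α / Real.Gamma (α + 1)) →
      ∀ t ∈ Set.Icc (0:ℝ) T, e t ≤ C * ε := by
  obtain ⟨hα0, -⟩ := hα
  set r := (2 * L + 1) ^ (1 / α)
  have hr : 0 < r := by positivity
  have hrα : r ^ α = 2 * L + 1 := by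
    rw [← rpow_mul (by positivity), one_div_mul_cancel hα0.ne', rpow_one]
  have hKr : L / Gamma α * ((1 / r) ^ α * Gamma α) ≤ 1 / 2 := by
    rw [div_rpow zero_le_one hr.le, one_rpow, hrα]
    field_simp
    linarith
  refine ⟨2 * (T ^ α / Gamma (α + 1)) * exp (r * T), by positivity,
    fun ε hε e he he0 h t ht => ?_⟩
  calc e t ≤ 2 * (ε * T ^ α / Gamma (α + 1)) * exp (r * t) :=
        fractional_gronwall_le_two_mul_mul_exp hα0 (by positivity) (by positivity) hr hKr
          he he0 h t ht
    _ ≤ 2 * (ε * T ^ α / Gamma (α + 1)) * exp (r * T) := by gcongr; exact ht.2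
    _ = 2 * (T ^ α / Gamma (α + 1)) * exp (r * T) * ε := by ring
end
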